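/- arXiv:2401.03051 — 2 statements merged into one kernel-verified Lean document; each statement's English description precedes it below -/
import Mathlib

section
/- Let φ(x) = log(α_1(x)/α_2(x)) be the intercept-update function and b the unique real with α_1(b) = 1. Then for x > b one has b ≤ φ(x) < x, and for x < b one has x < φ(x) ≤ b. -/
/-!
With `A(u) = Σ pᵢ/(pᵢ + qᵢu)` and `B(u) = Σ qᵢ/(pᵢ + qᵢu)` we have `α₁(x) = A(eˣ)/N₁`,
`α₂(x) = B(eˣ)/N₂` and `A(u) + u B(u) = N`. Hence `α₁(b) = 1` forces `α₂(b) = e⁻ᵇ`, i.e. `φ(b) = b`,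
and `φ(x) < x` exactly when `α₁(x) < 1`, i.e. when `x > b`, since `A` is decreasing.
The bounds by `b` follow because `φ` is monotone: `A(u)/B(u)` is nondecreasing, as
`(A(t) + B(t)u) · Σ (B(t)pᵢ - A(t)qᵢ)/(pᵢ + qᵢu)` equals `u - t` times a sum of squares.
-/

open Real Finset Filter

/-- Auxiliary function `α₁(x) = (1/N₁) Σ_i p_i / (p_i + q_i e^x)`. -/
noncomputable def alpha1 {N : ℕ} (N1 : ℕ) (p q : Fin N → ℝ) (x : ℝ) : ℝ :=
  (1 / (N1 : ℝ)) * ∑ i, p i / (p i + q i * Real.exp x)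

/-- Auxiliary function `α₂(x) = (1/N₂) Σ_i q_i / (p_i + q_i e^x)`. -/
noncomputable def alpha2 {N : ℕ} (N2 : ℕ) (p q : Fin N → ℝ) (x : ℝ) : ℝ :=
  (1 / (N2 : ℝ)) * ∑ i, q i / (p i + q i * Real.exp x)

/-- The intercept-update function `φ(x) = log(α₁(x)/α₂(x))`. -/
noncomputable def phi {N : ℕ} (N1 N2 : ℕ) (p q : Fin N → ℝ) (x : ℝ) : ℝ :=
  Real.log (alpha1 N1 p q x / alpha2 N2 p q x)

section FracSum

variable {ι : Type*} [Fintype ι]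

noncomputable def fracSum (w p q : ι → ℝ) (u : ℝ) : ℝ :=
  ∑ i, w i / (p i + q i * u)

variable {p q : ι → ℝ}

lemma fracSum_pos [Nonempty ι] {w : ι → ℝ} (hw : ∀ i, 0 < w i) (hp : ∀ i, 0 < p i)
    (hq : ∀ i, 0 < q i) {u : ℝ} (hu : 0 ≤ u) : 0 < fracSum w p q u :=
  Finset.sum_pos (fun i _ => div_pos (hw i) (by nlinarith [hp i, hq i])) univ_nonempty

lemma fracSum_add_mul_fracSum {u : ℝ} (hu : ∀ i, p i + q i * u ≠ 0) :
    fracSum p p q u + u * fracSum q p q u = Fintype.card ι := by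
  rw [fracSum, fracSum, mul_sum, ← sum_add_distrib]
  simp_rw [mul_div_assoc', ← add_div, mul_comm u, div_self (hu _), sum_const, card_univ,
    nsmul_eq_mul, mul_one]

lemma fracSum_strictAntiOn [Nonempty ι] (hp : ∀ i, 0 < p i) (hq : ∀ i, 0 < q i) :
    StrictAntiOn (fracSum p p q) (Set.Ici 0) := by
  intro u hu v _ huv
  refine Finset.sum_lt_sum_of_nonempty univ_nonempty fun i _ => ?_
  refine div_lt_div_of_pos_left (hp i) (by nlinarith [hp i, hq i, Set.mem_Ici.1 hu]) ?_
  nlinarith [hq i]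

lemma fracSum_mul_sub_mul (α β u : ℝ) :
    fracSum (fun i => β * p i - α * q i) p q u = β * fracSum p p q u - α * fracSum q p q u := by
  simp only [fracSum, mul_sum, ← sum_sub_distrib, sub_div, mul_div_assoc]

lemma add_mul_mul_div_eq {p q α β s t : ℝ} (ht : p + q * t ≠ 0) (hs : p + q * s ≠ 0) :
    (α + β * s) * ((β * p - α * q) / (p + q * s)) =
      (α + β * t) * ((β * p - α * q) / (p + q * t)) +
        (s - t) * ((β * p - α * q) ^ 2 / ((p + q * t) * (p + q * s))) := by
  simp only [mul_div_assoc']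
  rw [div_add_div _ _ ht (mul_ne_zero ht hs),
    div_eq_div_iff hs (mul_ne_zero ht (mul_ne_zero ht hs))]
  ring

lemma monotoneOn_fracSum_div [Nonempty ι] (hp : ∀ i, 0 < p i) (hq : ∀ i, 0 < q i) :
    MonotoneOn (fun u => fracSum p p q u / fracSum q p q u) (Set.Ici 0) := by
  intro t ht s hs hts
  have hden : ∀ u ∈ Set.Ici (0 : ℝ), ∀ i, 0 < p i + q i * u := fun u hu i => by
    nlinarith [hp i, hq i, Set.mem_Ici.1 hu]
  set α := fracSum p p q t
  set β := fracSum q p q t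
  have hα : 0 < α := fracSum_pos hp hp hq ht
  have hβ : 0 < β := fracSum_pos hq hp hq ht
  -- `β p - α q` is chosen so that its `fracSum` vanishes at `t`, leaving a sum of squares.
  have key : (α + β * s) * (β * fracSum p p q s - α * fracSum q p q s) =
      (s - t) * ∑ i, (β * p i - α * q i) ^ 2 / ((p i + q i * t) * (p i + q i * s)) := by
    have hzero : fracSum (fun i => β * p i - α * q i) p q t = 0 :=
      (fracSum_mul_sub_mul α β t).trans (by ring)
    rw [← fracSum_mul_sub_mul, fracSum, mul_sum]
    simp_rw [add_mul_mul_div_eq (hden t ht _).ne' (hden s hs _).ne']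
    rw [sum_add_distrib, ← mul_sum, ← mul_sum, ← fracSum, hzero, mul_zero, zero_add]
  have hsq : 0 ≤ (s - t) * ∑ i, (β * p i - α * q i) ^ 2 / ((p i + q i * t) * (p i + q i * s)) :=
    mul_nonneg (sub_nonneg.2 hts) (sum_nonneg fun i _ =>
      div_nonneg (sq_nonneg _) (mul_pos (hden t ht i) (hden s hs i)).le)
  rw [← key] at hsq
  have := nonneg_of_mul_nonneg_right hsq (by nlinarith [Set.mem_Ici.1 hs])
  rw [div_le_div_iff₀ hβ (fracSum_pos hq hp hq hs)]
  linarith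

end FracSum

section Phi

variable {N N1 N2 : ℕ} {p q : Fin N → ℝ}

lemma alpha1_eq_fracSum (x : ℝ) : alpha1 N1 p q x = fracSum p p q (exp x) / N1 := by
  rw [alpha1, fracSum, one_div_mul_eq_div]

lemma alpha2_eq_fracSum (x : ℝ) : alpha2 N2 p q x = fracSum q p q (exp x) / N2 := by
  rw [alpha2, fracSum, one_div_mul_eq_div]

lemma alpha1_strictAnti [Nonempty (Fin N)] (hN1 : 0 < N1) (hp : ∀ i, 0 < p i)
    (hq : ∀ i, 0 < q i) : StrictAnti (alpha1 N1 p q) := by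
  intro x y hxy
  simp only [alpha1_eq_fracSum]
  gcongr
  exact fracSum_strictAntiOn hp hq (exp_pos x).le (exp_pos y).le (exp_lt_exp.2 hxy)

lemma mul_alpha1_add_exp_mul_mul_alpha2 (hN1 : N1 ≠ 0) (hN2 : N2 ≠ 0) (hN : N1 + N2 = N)
    (hp : ∀ i, 0 < p i) (hq : ∀ i, 0 < q i) (x : ℝ) :
    N1 * alpha1 N1 p q x + exp x * (N2 * alpha2 N2 p q x) = N1 + N2 := by
  have hden : ∀ i, p i + q i * exp x ≠ 0 := fun i => by positivity [hp i, hq i]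
  rw [alpha1_eq_fracSum, alpha2_eq_fracSum, mul_div_cancel₀ _ (by exact_mod_cast hN1),
    mul_div_cancel₀ _ (by exact_mod_cast hN2), fracSum_add_mul_fracSum hden, Fintype.card_fin,
    ← hN, Nat.cast_add]

lemma alpha2_eq_exp_neg_of_alpha1_eq_one (hN1 : 0 < N1) (hN2 : 0 < N2) (hN : N1 + N2 = N)
    (hp : ∀ i, 0 < p i) (hq : ∀ i, 0 < q i) {b : ℝ} (hb : alpha1 N1 p q b = 1) :
    alpha2 N2 p q b = exp (-b) := by
  have h := mul_alpha1_add_exp_mul_mul_alpha2 hN1.ne' hN2.ne' hN hp hq b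
  rw [hb, mul_one, add_right_inj, mul_left_comm, mul_eq_left₀ (by positivity)] at h
  rw [exp_neg, eq_inv_of_mul_eq_one_right h]

lemma alpha1_pos [Nonempty (Fin N)] (hN1 : 0 < N1) (hp : ∀ i, 0 < p i) (hq : ∀ i, 0 < q i)
    (x : ℝ) : 0 < alpha1 N1 p q x := by
  rw [alpha1_eq_fracSum]
  exact div_pos (fracSum_pos hp hp hq (exp_pos x).le) (by exact_mod_cast hN1)

lemma alpha2_pos [Nonempty (Fin N)] (hN2 : 0 < N2) (hp : ∀ i, 0 < p i) (hq : ∀ i, 0 < q i)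
    (x : ℝ) : 0 < alpha2 N2 p q x := by
  rw [alpha2_eq_fracSum]
  exact div_pos (fracSum_pos hq hp hq (exp_pos x).le) (by exact_mod_cast hN2)

lemma phi_eq_self_of_alpha1_eq_one (hN1 : 0 < N1) (hN2 : 0 < N2) (hN : N1 + N2 = N)
    (hp : ∀ i, 0 < p i) (hq : ∀ i, 0 < q i) {b : ℝ} (hb : alpha1 N1 p q b = 1) :
    phi N1 N2 p q b = b := by
  rw [phi, hb, alpha2_eq_exp_neg_of_alpha1_eq_one hN1 hN2 hN hp hq hb, one_div, ← exp_neg,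
    neg_neg, log_exp]

lemma phi_eq_log_fracSum_div (x : ℝ) :
    phi N1 N2 p q x = log (N2 / N1 * (fracSum p p q (exp x) / fracSum q p q (exp x))) := by
  rw [phi, alpha1_eq_fracSum, alpha2_eq_fracSum, div_div_div_eq, mul_comm (N1 : ℝ),
    mul_div_mul_comm, mul_comm]

lemma phi_monotone [Nonempty (Fin N)] (hN1 : 0 < N1) (hN2 : 0 < N2) (hp : ∀ i, 0 < p i)
    (hq : ∀ i, 0 < q i) : Monotone (phi N1 N2 p q) := by
  intro x y hxy
  have hB := fracSum_pos hq hp hq (exp_pos x).le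
  have hA := fracSum_pos hp hp hq (exp_pos x).le
  simp only [phi_eq_log_fracSum_div]
  refine log_le_log (by positivity) (mul_le_mul_of_nonneg_left ?_ (by positivity))
  exact monotoneOn_fracSum_div hp hq (exp_pos x).le (exp_pos y).le (exp_le_exp.2 hxy)

-- `N₁ α₁(x) + N₂ (eˣ α₂(x)) = N₁ + N₂` makes `1` a weighted mean of `α₁(x)` and `eˣ α₂(x)`.
lemma phi_lt_self_iff [Nonempty (Fin N)] (hN1 : 0 < N1) (hN2 : 0 < N2) (hN : N1 + N2 = N)
    (hp : ∀ i, 0 < p i) (hq : ∀ i, 0 < q i) (x : ℝ) :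
    phi N1 N2 p q x < x ↔ alpha1 N1 p q x < 1 := by
  have h := mul_alpha1_add_exp_mul_mul_alpha2 hN1.ne' hN2.ne' hN hp hq x
  have hα2 := alpha2_pos hN2 hp hq x
  have hN1' : (0 : ℝ) < N1 := by exact_mod_cast hN1
  have hN2' : (0 : ℝ) < N2 := by exact_mod_cast hN2
  rw [phi, log_lt_iff_lt_exp (div_pos (alpha1_pos hN1 hp hq x) hα2), div_lt_iff₀ hα2]
  constructor <;> intro h' <;> nlinarith

lemma self_lt_phi_iff [Nonempty (Fin N)] (hN1 : 0 < N1) (hN2 : 0 < N2) (hN : N1 + N2 = N)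
    (hp : ∀ i, 0 < p i) (hq : ∀ i, 0 < q i) (x : ℝ) :
    x < phi N1 N2 p q x ↔ 1 < alpha1 N1 p q x := by
  have h := mul_alpha1_add_exp_mul_mul_alpha2 hN1.ne' hN2.ne' hN hp hq x
  have hα2 := alpha2_pos hN2 hp hq x
  have hN1' : (0 : ℝ) < N1 := by exact_mod_cast hN1
  have hN2' : (0 : ℝ) < N2 := by exact_mod_cast hN2
  rw [phi, lt_log_iff_exp_lt (div_pos (alpha1_pos hN1 hp hq x) hα2), lt_div_iff₀ hα2]
  constructor <;> intro h' <;> nlinarith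

end Phi

theorem phi_between_general {N : ℕ} (N1 N2 : ℕ) (hN1 : 0 < N1) (hN2 : 0 < N2)
    (hN : N1 + N2 = N) (p q : Fin N → ℝ) (hp : ∀ i, 0 < p i) (hq : ∀ i, 0 < q i)
    (b : ℝ) (hb : alpha1 N1 p q b = 1) :
    (∀ x, b < x → b ≤ phi N1 N2 p q x ∧ phi N1 N2 p q x < x) ∧
    (∀ x, x < b → x < phi N1 N2 p q x ∧ phi N1 N2 p q x ≤ b) := by
  have : Nonempty (Fin N) := ⟨⟨0, by omega⟩⟩
  have hmono := phi_monotone hN1 hN2 hp hq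
  have hfix := phi_eq_self_of_alpha1_eq_one hN1 hN2 hN hp hq hb
  have hanti := alpha1_strictAnti hN1 hp hq
  refine ⟨fun x hx => ⟨?_, ?_⟩, fun x hx => ⟨?_, ?_⟩⟩
  · exact hfix ▸ hmono hx.le
  · exact (phi_lt_self_iff hN1 hN2 hN hp hq x).2 (hb ▸ hanti hx)
  · exact (self_lt_phi_iff hN1 hN2 hN hp hq x).2 (hb ▸ hanti hx)
  · exact hfix ▸ hmono hx.le

theorem phi_between {N : ℕ} (N1 N2 : ℕ) (hN1 : 0 < N1) (hN2 : 0 < N2)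
    (hN : N1 + N2 = N) (p q : Fin N → ℝ) (hp : ∀ i, 0 < p i) (hq : ∀ i, 0 < q i)
    (hpq : ∀ i, p i + q i = 1) (b : ℝ) (hb : alpha1 N1 p q b = 1) :
    (∀ x, b < x → b ≤ phi N1 N2 p q x ∧ phi N1 N2 p q x < x) ∧
    (∀ x, x < b → x < phi N1 N2 p q x ∧ phi N1 N2 p q x ≤ b) :=
  phi_between_general N1 N2 hN1 hN2 hN p q hp hq b hb
end

section
/- The vector v = (N_2, -N_1) is an eigenvector of the Jacobian matrix J_b = [[1+α_1'(b), -α_1'(b)],[1+e^bα_2'(b), -e^bα_2'(b)]] corresponding to the eigenvalue μ = α_1'(b) - e^b α_2'(b). In particular the anti-diagonal entries of J_b satisfy N_1 J_{1,2} = N_2 J_{2,1}, i.e., -N_1 α_1'(b) = N_2 (1 + e^b α_2'(b)). -/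
open Real Finset Filter

/-!
For `D_i(x) = p_i + q_i e^x` one has termwise `(p_i / D_i)' + e^x (q_i / D_i)' = -q_i e^x / D_i
= p_i / D_i - 1`, so summing gives `N₁ α₁' + e^x N₂ α₂' = N₁ α₁ - N`, which at `b` equals
`N₁ - N = -N₂`. This single relation is both the anti-diagonal identity and, after
expanding `J_b v`, the eigenvector equation.
-/

theorem Matrix.mulVec_eq_smul_of_mul_add_mul_eq_neg {R : Type*} [CommRing R] (u v a c : R)
    (h : u * a + v * c = -v) :
    (!![1 + a, -a; 1 + c, -c]).mulVec ![v, -u] = (a - c) • ![v, -u] := by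
  ext i
  fin_cases i <;>
    simp only [Matrix.mulVec, dotProduct, Fin.sum_univ_two, Matrix.of_apply, Matrix.cons_val',
      Matrix.cons_val_zero, Matrix.cons_val_one, Matrix.cons_val_fin_one, Fin.zero_eta, Fin.mk_one,
      Pi.smul_apply, smul_eq_mul] <;>
    linear_combination h

theorem hasDerivAt_div_add_mul_exp (n a c x : ℝ) (hd : a + c * exp x ≠ 0) :
    HasDerivAt (fun y => n / (a + c * exp y)) (-(n * (c * exp x)) / (a + c * exp x) ^ 2) x := by
  simp only [div_eq_mul_inv]
  exact (((((hasDerivAt_exp x).const_mul c).const_add a).inv hd).const_mul n).congr_deriv (by ring)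

theorem hasDerivAt_const_mul_sum_div_add_mul_exp {N : ℕ} (c : ℝ) (n p q : Fin N → ℝ) (x : ℝ)
    (hd : ∀ i, p i + q i * exp x ≠ 0) :
    HasDerivAt (fun y => c * ∑ i, n i / (p i + q i * exp y))
      (c * ∑ i, -(n i * (q i * exp x)) / (p i + q i * exp x) ^ 2) x :=
  (HasDerivAt.fun_sum fun i _ => hasDerivAt_div_add_mul_exp (n i) (p i) (q i) x (hd i)).const_mul c

theorem natCast_mul_deriv_alpha1_add_exp_mul {N : ℕ} (N1 N2 : ℕ) (hN1 : N1 ≠ 0) (hN2 : N2 ≠ 0)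
    (p q : Fin N → ℝ) (x : ℝ) (hd : ∀ i, p i + q i * exp x ≠ 0) :
    N1 * deriv (alpha1 N1 p q) x + exp x * (N2 * deriv (alpha2 N2 p q) x) =
      N1 * alpha1 N1 p q x - N := by
  have hN1' : (N1 : ℝ) ≠ 0 := Nat.cast_ne_zero.mpr hN1
  have hN2' : (N2 : ℝ) ≠ 0 := Nat.cast_ne_zero.mpr hN2
  have hterm : ∀ i, -(p i * (q i * exp x)) / (p i + q i * exp x) ^ 2
      + exp x * (-(q i * (q i * exp x)) / (p i + q i * exp x) ^ 2)
      = p i / (p i + q i * exp x) - 1 := by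
    intro i
    field_simp [hd i]
    ring
  have h1 : HasDerivAt (alpha1 N1 p q) _ x := hasDerivAt_const_mul_sum_div_add_mul_exp _ p p q x hd
  have h2 : HasDerivAt (alpha2 N2 p q) _ x := hasDerivAt_const_mul_sum_div_add_mul_exp _ q p q x hd
  calc (N1 : ℝ) * deriv (alpha1 N1 p q) x + exp x * (N2 * deriv (alpha2 N2 p q) x)
      = ∑ i, (-(p i * (q i * exp x)) / (p i + q i * exp x) ^ 2
          + exp x * (-(q i * (q i * exp x)) / (p i + q i * exp x) ^ 2)) := by
        rw [h1.deriv, h2.deriv, one_div, one_div, mul_inv_cancel_left₀ hN1',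
          mul_inv_cancel_left₀ hN2', mul_sum, sum_add_distrib]
    _ = ∑ i, (p i / (p i + q i * exp x) - 1) := sum_congr rfl fun i _ => hterm i
    _ = N1 * alpha1 N1 p q x - N := by
        rw [sum_sub_distrib, alpha1, one_div, mul_inv_cancel_left₀ hN1']
        simp

theorem eigenvector_of_Jb_general {N : ℕ} (N1 N2 : ℕ) (hN1 : 0 < N1) (hN2 : 0 < N2)
    (hN : N1 + N2 = N) (p q : Fin N → ℝ) (hp : ∀ i, 0 < p i) (hq : ∀ i, 0 < q i)
    (b : ℝ) (hb : alpha1 N1 p q b = 1) :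
    (!![1 + deriv (alpha1 N1 p q) b, -(deriv (alpha1 N1 p q) b);
        1 + Real.exp b * deriv (alpha2 N2 p q) b,
        -(Real.exp b * deriv (alpha2 N2 p q) b)]).mulVec ![(N2 : ℝ), -(N1 : ℝ)] =
      (deriv (alpha1 N1 p q) b - Real.exp b * deriv (alpha2 N2 p q) b) •
        ![(N2 : ℝ), -(N1 : ℝ)] ∧
    -(N1 : ℝ) * deriv (alpha1 N1 p q) b =
      (N2 : ℝ) * (1 + Real.exp b * deriv (alpha2 N2 p q) b) := by
  have hd : ∀ i, p i + q i * exp b ≠ 0 := fun i =>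
    (add_pos (hp i) (mul_pos (hq i) (exp_pos b))).ne'
  have key := natCast_mul_deriv_alpha1_add_exp_mul N1 N2 hN1.ne' hN2.ne' p q b hd
  have hNc : (N : ℝ) = N1 + N2 := by exact_mod_cast hN.symm
  rw [hb, hNc] at key
  exact ⟨Matrix.mulVec_eq_smul_of_mul_add_mul_eq_neg _ _ _ _ (by linear_combination key),
    by linear_combination -key⟩

theorem eigenvector_of_Jb {N : ℕ} (N1 N2 : ℕ) (hN1 : 0 < N1) (hN2 : 0 < N2)
    (hN : N1 + N2 = N) (p q : Fin N → ℝ) (hp : ∀ i, 0 < p i) (hq : ∀ i, 0 < q i)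
    (hpq : ∀ i, p i + q i = 1) (b : ℝ) (hb : alpha1 N1 p q b = 1) :
    (!![1 + deriv (alpha1 N1 p q) b, -(deriv (alpha1 N1 p q) b);
        1 + Real.exp b * deriv (alpha2 N2 p q) b,
        -(Real.exp b * deriv (alpha2 N2 p q) b)]).mulVec ![(N2 : ℝ), -(N1 : ℝ)] =
      (deriv (alpha1 N1 p q) b - Real.exp b * deriv (alpha2 N2 p q) b) •
        ![(N2 : ℝ), -(N1 : ℝ)] ∧
    -(N1 : ℝ) * deriv (alpha1 N1 p q) b =
      (N2 : ℝ) * (1 + Real.exp b * deriv (alpha2 N2 p q) b) :=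
  eigenvector_of_Jb_general N1 N2 hN1 hN2 hN p q hp hq b hb
end
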